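/- Let n ≥ 1, let A ∈ GL_n(ℂ), and let Q(X) = X^p − c_{p−1}X^{p−1} − ⋯ − c_1X − c_0 ∈ ℂ[X] be a monic polynomial of degree p ≥ 1 with Q(A) = 0 and c_0 ≠ 0. Let C_Q be the companion matrix of Q and c := (c_{p−1}, c_{p−2}, …, c_0) ∈ ℂ^p. Then there exist a C-flow φ of A and a C-flow ψ of C_Q, both with all entry functions analytic on ℂ, such that for every z ∈ ℂ one has φ(z) = Σ_{i=1}^p (ψ(z)·c)_i · A^{−i}, where ψ(z)·c denotes the matrix–vector product. -/

import Mathlib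

/-- The companion matrix of the monic polynomial
`X^p − c_{p−1}X^{p−1} − ⋯ − c_1 X − c_0` (where `c i` is the coefficient `c_i`):
its first column is `(c_{p−1}, …, c_0)ᵗ`, its `(i, i+1)` entries are `1`,
and all other entries are `0`. -/
def companionOf (p : ℕ) (c : Fin p → ℂ) : Matrix (Fin p) (Fin p) ℂ :=
  Matrix.of fun i j : Fin p =>
    if (j : ℕ) = (i : ℕ) + 1 then 1 else if (j : ℕ) = 0 then c i.rev else 0

/-!
In a finite-dimensional commutative complex Banach algebra the range of `exp` is open, and it is
closed inside the units because it is a group. The segment `t ↦ 1 + t • (x - 1)` from `1` to a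
unit `x` leaves the units only at finitely many `t`, and `ℂ` minus a finite set is connected, so
every unit is an exponential. In `ℂ[C_Q]` this gives `L` with `exp L = C_Q` and every
`ψ(z) = exp (z • L)` a polynomial in `C_Q`.

The map `w ↦ Σᵢ wᵢ A^{-i}` turns multiplication by `C_Q` into left multiplication by `A` and sends
`c` to `A^{-p} Σⱼ cⱼ Aʲ = 1` (this is `Q(A) = 0`), so it sends `q(C_Q) c` to `q(A)`. Hence
`φ(z) = Σᵢ (ψ(z) c)ᵢ A^{-i}` inherits the flow property of `ψ`, and `φ(1) = A`.
-/

open Polynomial Matrix NormedSpace Topology Filter Set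

theorem NormedSpace.range_exp_mem_nhds_one (𝕂 : Type*) {𝔸 : Type*} [RCLike 𝕂] [NormedRing 𝔸]
    [NormedAlgebra 𝕂 𝔸] [CompleteSpace 𝔸] : range (exp : 𝔸 → 𝔸) ∈ 𝓝 1 := by
  have h := (hasStrictFDerivAt_exp_zero (𝕂 := 𝕂) (𝔸 := 𝔸)).map_nhds_eq_of_equiv
    (f' := ContinuousLinearEquiv.refl 𝕂 𝔸)
  rw [exp_zero] at h
  exact h ▸ range_mem_map

theorem NormedSpace.isOpen_range_exp (𝕂 : Type*) {𝔸 : Type*} [RCLike 𝕂] [NormedCommRing 𝔸]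
    [NormedAlgebra 𝕂 𝔸] [CompleteSpace 𝔸] : IsOpen (range (exp : 𝔸 → 𝔸)) := by
  let := NormedAlgebra.restrictScalars ℚ 𝕂 𝔸
  refine isOpen_iff_mem_nhds.2 ?_
  rintro _ ⟨a, rfl⟩
  have h1 : exp (-a) * exp a = 1 := by
    rw [← exp_add_of_commute (Commute.all _ _), neg_add_cancel, exp_zero]
  have hnhds : (exp (-a) * ·) ⁻¹' range exp ∈ 𝓝 (exp a) :=
    (continuous_const_mul _).continuousAt.preimage_mem_nhds
      (by rw [h1]; exact range_exp_mem_nhds_one 𝕂)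
  refine mem_of_superset hnhds ?_
  rintro y ⟨b, hb⟩
  refine ⟨a + b, ?_⟩
  rw [exp_add_of_commute (Commute.all _ _), hb, ← mul_assoc, ← exp_add_of_commute (Commute.all _ _),
    add_neg_cancel, exp_zero, one_mul]

theorem NormedSpace.mem_range_exp_of_isUnit_of_mem_closure (𝕂 : Type*) {𝔸 : Type*} [RCLike 𝕂]
    [NormedCommRing 𝔸] [NormedAlgebra 𝕂 𝔸] [CompleteSpace 𝔸] {x : 𝔸} (hx : IsUnit x)
    (hcl : x ∈ closure (range (exp : 𝔸 → 𝔸))) : x ∈ range (exp : 𝔸 → 𝔸) := by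
  let := NormedAlgebra.restrictScalars ℚ 𝕂 𝔸
  have h1 : x * Ring.inverse x = 1 := Ring.mul_inverse_cancel x hx
  have hcont : ContinuousAt (fun y => x * Ring.inverse y) x :=
    continuousAt_const.mul (by simpa using NormedRing.inverse_continuousAt hx.unit)
  have hnhds : (x * Ring.inverse ·) ⁻¹' range exp ∈ 𝓝 x :=
    hcont.preimage_mem_nhds (by rw [h1]; exact range_exp_mem_nhds_one 𝕂)
  obtain ⟨_, ⟨c, hc⟩, b, rfl⟩ := mem_closure_iff_nhds.1 hcl _ hnhds
  refine ⟨c + b, ?_⟩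
  dsimp only at hc
  rw [exp_add_of_commute (Commute.all _ _), hc, Ring.inverse_exp, mul_assoc,
    ← exp_add_of_commute (Commute.all _ _), neg_add_cancel, exp_zero, mul_one]

theorem spectrum.finite_of_finiteDimensional {K A : Type*} [Field K] [Ring A] [Algebra K A]
    [FiniteDimensional K A] (x : A) : (spectrum K x).Finite := by
  have h : spectrum K x = spectrum K (Algebra.lmul K A x) := by
    ext r
    simp only [spectrum.mem_iff, ← Algebra.lmul_isUnit_iff (R := K), map_sub, AlgHom.commutes]
  exact h ▸ Module.End.finite_spectrum _

theorem isUnit_one_add_smul_sub_one {𝔸 : Type*} [Ring 𝔸] [Algebra ℂ 𝔸] {x : 𝔸} {t : ℂ}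
    (ht : 1 - t⁻¹ ∉ spectrum ℂ x) : IsUnit (1 + t • (x - 1)) := by
  rcases eq_or_ne t 0 with rfl | ht0
  · simp
  have h : 1 + t • (x - 1) = (-t) • (algebraMap ℂ 𝔸 (1 - t⁻¹) - x) := by
    rw [Algebra.algebraMap_eq_smul_one]
    match_scalars
    · field_simp; ring
    · ring
  rw [h, Algebra.smul_def]
  exact ((isUnit_iff_ne_zero.2 (neg_ne_zero.2 ht0)).map _).mul (spectrum.notMem_iff.1 ht)

theorem NormedSpace.mem_range_exp_of_isUnit {𝔸 : Type*} [NormedCommRing 𝔸] [NormedAlgebra ℂ 𝔸]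
    [FiniteDimensional ℂ 𝔸] {x : 𝔸} (hx : IsUnit x) : x ∈ range (exp : 𝔸 → 𝔸) := by
  have : CompleteSpace 𝔸 := FiniteDimensional.complete ℂ 𝔸
  let γ : ℂ → 𝔸 := fun t => 1 + t • (x - 1)
  have hγ : Continuous γ := by fun_prop
  let S := {t : ℂ | IsUnit (γ t)}
  have hSc : Sᶜ ⊆ (fun t : ℂ => 1 - t⁻¹) ⁻¹' spectrum ℂ x := fun t ht =>
    by_contra fun h => ht (isUnit_one_add_smul_sub_one h)
  have hS : IsPreconnected S := by
    have hcount : Sᶜ.Countable := ((spectrum.finite_of_finiteDimensional x).preimage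
      ((sub_right_injective.comp inv_injective).injOn)).countable.mono hSc
    have := hcount.isPathConnected_compl_of_one_lt_rank (by simp [Complex.rank_real_complex])
    simpa using this.isConnected.isPreconnected
  have hSu : S ⊆ γ ⁻¹' range exp := by
    refine hS.subset_of_closure_inter_subset ((isOpen_range_exp ℂ).preimage hγ) ⟨0, ?_, 0, ?_⟩ ?_
    · simp [S, γ]
    · simp [γ]
    · rintro t ⟨htcl, htS⟩
      exact mem_range_exp_of_isUnit_of_mem_closure ℂ htS (hγ.closure_preimage_subset _ htcl)
  simpa [γ] using hSu (show (1 : ℂ) ∈ S by simpa [S, γ] using hx)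

theorem Subalgebra.isUnit_of_isUnit_val {K A : Type*} [Field K] [Ring A] [Algebra K A]
    {S : Subalgebra K A} [FiniteDimensional K S] {x : S} (hx : IsUnit (x : A)) : IsUnit x := by
  have hinj : Function.Injective (Algebra.lmul K S x) := fun y z h =>
    Subtype.ext (hx.mul_left_cancel (congrArg Subtype.val h))
  rw [← Algebra.lmul_isUnit_iff (R := K), Module.End.isUnit_iff]
  exact ⟨hinj, LinearMap.injective_iff_surjective.1 hinj⟩

theorem Matrix.exists_exp_eq_of_isUnit {m : Type*} [Fintype m] [DecidableEq m]
    {C : Matrix m m ℂ} (hC : IsUnit C) :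
    ∃ L : Matrix m m ℂ, exp L = C ∧ ∀ z : ℂ, exp (z • L) ∈ Algebra.adjoin ℂ {C} := by
  let : NormedRing (Matrix m m ℂ) := Matrix.linftyOpNormedRing
  let : NormedAlgebra ℂ (Matrix m m ℂ) := Matrix.linftyOpNormedAlgebra
  let S := Algebra.adjoin ℂ {C}
  let : NormedCommRing S :=
    { S.normedRing with mul_comm := (Algebra.isMulCommutative_adjoin ℂ (by simp)).is_comm.comm }
  let := NormedAlgebra.restrictScalars ℚ ℂ S
  -- the metric topology of `S`, which agrees with the subspace topology only up to unfolding
  let : TopologicalSpace S := PseudoMetricSpace.toUniformSpace.toTopologicalSpace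
  have hexp (y : S) : exp (y : Matrix m m ℂ) = exp y :=
    (map_exp S.val continuous_subtype_val y).symm
  obtain ⟨L, hL⟩ := mem_range_exp_of_isUnit
    (Subalgebra.isUnit_of_isUnit_val (x := ⟨C, Algebra.self_mem_adjoin_singleton ℂ C⟩) hC)
  refine ⟨L, by rw [hexp, hL], fun z => ?_⟩
  rw [← Subalgebra.coe_smul, hexp]
  exact (exp (z • L)).2

section Companion

variable {m : ℕ} (c : Fin (m + 1) → ℂ)

theorem companionOf_mulVec (w : Fin (m + 1) → ℂ) :
    companionOf (m + 1) c *ᵥ w = Fin.snoc (Fin.tail w) 0 + w 0 • fun j => c j.rev := by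
  ext i
  induction i using Fin.lastCases with
  | last => simp [mulVec, dotProduct, companionOf, Fin.sum_univ_succ, mul_comm,
      fun x : Fin m => x.isLt.ne]
  | cast j => simp [mulVec, dotProduct, companionOf, Fin.sum_univ_succ, Fin.val_inj, Fin.tail,
      add_comm, mul_comm]

theorem isUnit_companionOf (hc0 : c 0 ≠ 0) : IsUnit (companionOf (m + 1) c) := by
  rw [isUnit_iff_isUnit_det, isUnit_iff_ne_zero, Ne, ← exists_mulVec_eq_zero_iff]
  rintro ⟨w, hw0, hw⟩
  rw [companionOf_mulVec] at hw
  have h0 : w 0 = 0 := by simpa [hc0] using congrFun hw (Fin.last m)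
  refine hw0 (funext fun i => ?_)
  induction i using Fin.cases with
  | zero => exact h0
  | succ j => simpa [h0, Fin.tail] using congrFun hw j.castSucc

end Companion

noncomputable def negPowCombination {ι : Type*} [Fintype ι] [DecidableEq ι]
    (A : Matrix ι ι ℂ) (p : ℕ) : (Fin p → ℂ) →ₗ[ℂ] Matrix ι ι ℂ :=
  Fintype.linearCombination ℂ fun i : Fin p => A ^ (-1 - (i : ℤ))

section NegPowCombination

variable {ι : Type*} [Fintype ι] [DecidableEq ι] {A : Matrix ι ι ℂ} {m : ℕ}
  {c : Fin (m + 1) → ℂ}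

theorem negPowCombination_rev (hA : IsUnit A) (hAp : A ^ (m + 1) = ∑ i, c i • A ^ (i : ℕ)) :
    negPowCombination A (m + 1) (fun j => c j.rev) = 1 := by
  have hdet := (isUnit_iff_isUnit_det A).1 hA
  have hexp (i : Fin (m + 1)) : -1 - ((i.rev : ℕ) : ℤ) = i - (m + 1 : ℕ) := by
    rw [Fin.val_rev]; omega
  calc negPowCombination A (m + 1) (fun j => c j.rev)
      = ∑ i, c i • A ^ (-1 - ((i.rev : ℕ) : ℤ)) := by
        rw [negPowCombination, Fintype.linearCombination_apply,
          ← Equiv.sum_comp Fin.revPerm]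
        simp [Fin.revPerm_apply]
    _ = (∑ i, c i • A ^ (i : ℕ)) * A ^ (-(m + 1 : ℕ) : ℤ) := by
        simp_rw [hexp, sub_eq_add_neg, zpow_add hdet, zpow_natCast, Finset.sum_mul, smul_mul_assoc]
    _ = 1 := by
        rw [← hAp, zpow_neg_natCast, mul_nonsing_inv _ ((isUnit_iff_isUnit_det _).1 (hA.pow _))]

theorem negPowCombination_companionOf_mulVec (hA : IsUnit A)
    (hAp : A ^ (m + 1) = ∑ i, c i • A ^ (i : ℕ)) (w : Fin (m + 1) → ℂ) :
    negPowCombination A (m + 1) (companionOf (m + 1) c *ᵥ w) =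
      A * negPowCombination A (m + 1) w := by
  have hdet := (isUnit_iff_isUnit_det A).1 hA
  have hshift (j : ℤ) : A * A ^ (-1 - (j + 1)) = A ^ (-1 - j) := by
    rw [← zpow_one_add hdet]; ring_nf
  have hsnoc : negPowCombination A (m + 1) (Fin.snoc (Fin.tail w) 0) =
      ∑ j : Fin m, w j.succ • A ^ (-1 - (j : ℤ)) := by
    simp [negPowCombination, Fintype.linearCombination_apply, Fin.sum_univ_castSucc, Fin.tail]
  have hmul : A * negPowCombination A (m + 1) w =
      w 0 • 1 + ∑ j : Fin m, w j.succ • A ^ (-1 - (j : ℤ)) := by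
    rw [negPowCombination, Fintype.linearCombination_apply, Fin.sum_univ_succ, mul_add,
      Finset.mul_sum]
    simp only [mul_smul_comm, Fin.val_succ, Nat.cast_add, Nat.cast_one, hshift, Fin.val_zero,
      Nat.cast_zero, sub_zero, Matrix.zpow_neg_one, mul_nonsing_inv A hdet]
  rw [companionOf_mulVec, map_add, map_smul, negPowCombination_rev hA hAp, hsnoc, hmul, add_comm]

theorem negPowCombination_aeval_companionOf_mulVec (hA : IsUnit A)
    (hAp : A ^ (m + 1) = ∑ i, c i • A ^ (i : ℕ)) (q : ℂ[X]) :
    negPowCombination A (m + 1) (aeval (companionOf (m + 1) c) q *ᵥ fun j => c j.rev) =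
      aeval A q := by
  have hpow (k : ℕ) :
      negPowCombination A (m + 1) (companionOf (m + 1) c ^ k *ᵥ fun j => c j.rev) = A ^ k := by
    induction k with
    | zero => simpa using negPowCombination_rev hA hAp
    | succ k ih =>
      rw [pow_succ', ← mulVec_mulVec, negPowCombination_companionOf_mulVec hA hAp, ih, pow_succ']
  simp [aeval_eq_sum_range, sum_mulVec, smul_mulVec, hpow]

end NegPowCombination

structure IsCFlow {M : Type*} [Monoid M] (φ : ℂ → M) (a : M) : Prop where
  map_add : ∀ z w, φ (z + w) = φ z * φ w
  map_zero : φ 0 = 1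
  map_one : φ 1 = a

theorem IsCFlow.comp_of_aeval_eq {R A B : Type*} [CommSemiring R] [Semiring A] [Semiring B]
    [Algebra R A] [Algebra R B] {ψ : ℂ → A} {a : A} (hψ : IsCFlow ψ a)
    (hψa : ∀ z, ψ z ∈ Algebra.adjoin R {a}) (b : B) (F : A → B)
    (hF : ∀ q : R[X], F (aeval a q) = aeval b q) : IsCFlow (F ∘ ψ) b := by
  have hpoly (z : ℂ) : ∃ q : R[X], ψ z = aeval a q := by
    obtain ⟨q, hq⟩ := Algebra.adjoin_singleton_eq_range_aeval R a ▸ hψa z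
    exact ⟨q, hq.symm⟩
  refine ⟨fun z w => ?_, ?_, ?_⟩
  · obtain ⟨q, hq⟩ := hpoly z
    obtain ⟨r, hr⟩ := hpoly w
    simp only [Function.comp_apply, hψ.map_add, hq, hr, ← map_mul, hF]
  · simpa [hψ.map_zero] using hF 1
  · simpa [hψ.map_one] using hF X

theorem Matrix.isCFlow_exp_smul {m : Type*} [Fintype m] [DecidableEq m] (L : Matrix m m ℂ) :
    IsCFlow (fun z : ℂ => exp (z • L)) (exp L) where
  map_add z w := by
    rw [add_smul, Matrix.exp_add_of_commute _ _ (((Commute.refl L).smul_left z).smul_right w)]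
  map_zero := by simp
  map_one := by simp

theorem Matrix.differentiable_exp_smul_apply {m : Type*} [Fintype m] [DecidableEq m]
    (L : Matrix m m ℂ) (i j : m) : Differentiable ℂ fun z : ℂ => exp (z • L) i j := by
  let : NormedRing (Matrix m m ℂ) := Matrix.linftyOpNormedRing
  let : NormedAlgebra ℂ (Matrix m m ℂ) := Matrix.linftyOpNormedAlgebra
  have h : Differentiable ℂ fun z : ℂ => exp (z • L) := fun z =>
    (hasDerivAt_exp_smul_const L z).differentiableAt
  exact (LinearMap.toContinuousLinearMap (entryLinearMap ℂ ℂ i j)).differentiable.comp h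

theorem exists_C_flows_main_general (n : ℕ)
    (A : Matrix (Fin n) (Fin n) ℂ) (hA : IsUnit A) (p : ℕ) (hp : 1 ≤ p)
    (c : Fin p → ℂ) (hc0 : c ⟨0, hp⟩ ≠ 0)
    (hQ : Polynomial.aeval A
      (Polynomial.X ^ p - ∑ i : Fin p, Polynomial.C (c i) * Polynomial.X ^ (i : ℕ)) = 0) :
    ∃ (φ : ℂ → Matrix (Fin n) (Fin n) ℂ) (ψ : ℂ → Matrix (Fin p) (Fin p) ℂ),
      (∀ z w : ℂ, φ (z + w) = φ z * φ w) ∧ φ 0 = 1 ∧ φ 1 = A ∧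
      (∀ i j : Fin n, Differentiable ℂ (fun z : ℂ => φ z i j)) ∧
      (∀ z w : ℂ, ψ (z + w) = ψ z * ψ w) ∧ ψ 0 = 1 ∧ ψ 1 = companionOf p c ∧
      (∀ i j : Fin p, Differentiable ℂ (fun z : ℂ => ψ z i j)) ∧
      ∀ z : ℂ,
        φ z = ∑ i : Fin p, (ψ z).mulVec (fun j : Fin p => c j.rev) i • A ^ (-1 - (i : ℤ)) := by
  obtain ⟨m, rfl⟩ : ∃ m, p = m + 1 := ⟨p - 1, by omega⟩
  have hAp : A ^ (m + 1) = ∑ i, c i • A ^ (i : ℕ) := by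
    simpa [sub_eq_zero, Algebra.smul_def] using hQ
  obtain ⟨L, hLC, hLadj⟩ := exists_exp_eq_of_isUnit (isUnit_companionOf c hc0)
  have hψ : IsCFlow (fun z : ℂ => exp (z • L)) (companionOf (m + 1) c) :=
    hLC ▸ isCFlow_exp_smul L
  have hφ := hψ.comp_of_aeval_eq hLadj A
    (fun M => negPowCombination A (m + 1) (M *ᵥ fun j => c j.rev))
    (negPowCombination_aeval_companionOf_mulVec hA hAp)
  refine ⟨_, _, hφ.map_add, hφ.map_zero, hφ.map_one, fun i j => ?_, hψ.map_add, hψ.map_zero,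
    hψ.map_one, differentiable_exp_smul_apply L, fun z => ?_⟩
  · simp only [Function.comp_def, negPowCombination, Fintype.linearCombination_apply,
      Matrix.sum_apply, Matrix.smul_apply, smul_eq_mul, mulVec, dotProduct]
    exact .fun_sum fun k _ => .mul_const (.fun_sum fun l _ =>
      (differentiable_exp_smul_apply L k l).mul_const _) _
  · exact Fintype.linearCombination_apply ℂ _ _

/-- if `Q = X^p − c_{p−1}X^{p−1} − ⋯ − c_0` satisfies `Q(A) = 0` and
`c_0 ≠ 0`, with companion matrix `C_Q` and `c = (c_{p−1}, …, c_0)` (the vector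
`fun j => c j.rev`), then there exist a C-flow `φ` of `A` and a C-flow `ψ` of `C_Q`, both
with differentiable entry functions, such that `φ(z) = Σ_{i=1}^p (ψ(z)·c)_i A^{−i}` for all
`z ∈ ℂ` (zero-based: `i : Fin p` corresponds to `A^{−1−i}`). -/
theorem exists_C_flows_main (n : ℕ) (hn : 1 ≤ n)
    (A : Matrix (Fin n) (Fin n) ℂ) (hA : IsUnit A) (p : ℕ) (hp : 1 ≤ p)
    (c : Fin p → ℂ) (hc0 : c ⟨0, hp⟩ ≠ 0)
    (hQ : Polynomial.aeval A
      (Polynomial.X ^ p - ∑ i : Fin p, Polynomial.C (c i) * Polynomial.X ^ (i : ℕ)) = 0) :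
    ∃ (φ : ℂ → Matrix (Fin n) (Fin n) ℂ) (ψ : ℂ → Matrix (Fin p) (Fin p) ℂ),
      (∀ z w : ℂ, φ (z + w) = φ z * φ w) ∧ φ 0 = 1 ∧ φ 1 = A ∧
      (∀ i j : Fin n, Differentiable ℂ (fun z : ℂ => φ z i j)) ∧
      (∀ z w : ℂ, ψ (z + w) = ψ z * ψ w) ∧ ψ 0 = 1 ∧ ψ 1 = companionOf p c ∧
      (∀ i j : Fin p, Differentiable ℂ (fun z : ℂ => ψ z i j)) ∧
      ∀ z : ℂ,
        φ z = ∑ i : Fin p, (ψ z).mulVec (fun j : Fin p => c j.rev) i • A ^ (-1 - (i : ℤ)) :=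
  exists_C_flows_main_general n A hA p hp c hc0 hQ
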